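/- Let T be the subgroup of a group G generated by all ℚ-perfect subgroups of G. Then every ℚ-perfect subgroup of the quotient G/T is trivial; equivalently, every group homomorphism from a ℚ-perfect group to G/T is trivial. -/

import Mathlib

/-!
The class of `ℚ`-perfect groups is closed under joins of subgroups and, since abelianization is
right exact and torsion groups are closed under extensions, under extensions. So `T` is itself
`ℚ`-perfect, and the preimage in `G` of a `ℚ`-perfect `K ≤ G ⧸ T` is an extension of `K` by `T`,
hence `ℚ`-perfect, hence contained in `T`; thus `K` is trivial.
-/

theorem Abelianization.of_surjective {G : Type*} [Group G] :
    Function.Surjective (of : G →* Abelianization G) :=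
  QuotientGroup.mk_surjective

theorem Abelianization.of_eq_one_of_mem_commutator {G : Type*} [Group G] {a : G}
    (h : a ∈ commutator G) : of a = 1 := by
  rwa [← MonoidHom.mem_ker, ker_of]

theorem Abelianization.ker_map_le_range_map_subtype {G H : Type*} [Group G] [Group H]
    {f : G →* H} (hf : Function.Surjective f) :
    (map f).ker ≤ (map f.ker.subtype).range := by
  intro x hx
  obtain ⟨a, rfl⟩ := of_surjective x
  have hfa : f a ∈ commutator H := by
    rw [← ker_of, MonoidHom.mem_ker, ← map_of]
    exact hx
  rw [_root_.commutator_def, ← Subgroup.map_top_of_surjective f hf, ← Subgroup.map_commutator,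
    ← _root_.commutator_def] at hfa
  obtain ⟨c, hc, hfc⟩ := hfa
  have hk : c⁻¹ * a ∈ f.ker := by simp [MonoidHom.mem_ker, hfc]
  refine ⟨of ⟨c⁻¹ * a, hk⟩, ?_⟩
  rw [map_of, Subgroup.coe_subtype, map_mul, map_inv, of_eq_one_of_mem_commutator hc, inv_one,
    one_mul]

theorem MonoidHom.ker_subgroupComap {G G' : Type*} [Group G] [Group G'] (f : G →* G')
    (H' : Subgroup G') : (f.subgroupComap H').ker = f.ker.subgroupOf (H'.comap f) := by
  ext x
  rw [mem_ker, Subgroup.mem_subgroupOf, mem_ker, ← Subtype.val_inj]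
  rfl

-- `H₁(G; ℚ) = Abelianization G ⊗ ℚ` vanishes exactly when `Abelianization G` is torsion.
def IsQPerfect (G : Type*) [Group G] : Prop :=
  IsMulTorsion (Abelianization G)

namespace IsQPerfect

variable {G H : Type*} [Group G] [Group H]

theorem of_mulEquiv (e : G ≃* H) (hG : IsQPerfect G) : IsQPerfect H :=
  hG.of_surjective e.abelianizationCongr.surjective

theorem of_ker_of_surjective {f : G →* H} (hf : Function.Surjective f) (hker : IsQPerfect f.ker)
    (hH : IsQPerfect H) : IsQPerfect G :=
  IsMulTorsion.extension_closed rfl hH fun x ↦ by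
    obtain ⟨y, hy⟩ := Abelianization.ker_map_le_range_map_subtype hf x.2
    exact Submonoid.isOfFinOrder_coe.1 <| hy ▸ (Abelianization.map _).isOfFinOrder (hker y)

theorem iSup {ι : Sort*} {S : ι → Subgroup G} (hS : ∀ i, IsQPerfect (S i)) :
    IsQPerfect ↥(⨆ i, S i) := by
  intro x
  obtain ⟨⟨g, hg⟩, rfl⟩ := Abelianization.of_surjective x
  induction hg using Subgroup.iSup_induction' with
  | hp i g hg =>
    exact (Abelianization.map (Subgroup.inclusion (le_iSup S i))).isOfFinOrder
      (hS i (Abelianization.of ⟨g, hg⟩))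
  | h1 => exact map_one (Abelianization.of (G := ↥(⨆ i, S i))) ▸ IsOfFinOrder.one
  | hmul x y hx hy hfx hfy => exact (Commute.all _ _).isOfFinOrder_mul hfx hfy

end IsQPerfect

/-- If `T` is the subgroup generated by all ℚ-perfect subgroups of `G` (which is
normal), then every ℚ-perfect subgroup of `G ⧸ T` is trivial. -/
theorem Qperfect_radical_one_step (G : Type*) [Group G] (T : Subgroup G)
    (hT : T = ⨆ (H : Subgroup G) (_ : Monoid.IsTorsion (Abelianization H)), H)
    [T.Normal] :
    ∀ K : Subgroup (G ⧸ T), Monoid.IsTorsion (Abelianization K) → K = ⊥ := by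
  intro K hK
  set π := QuotientGroup.mk' T
  set P := K.comap π
  have hTP : T ≤ P := QuotientGroup.ker_mk' T ▸ π.ker_le_comap K
  have hT_perfect : IsQPerfect T := by
    rw [hT, iSup_subtype']
    exact IsQPerfect.iSup fun H ↦ H.2
  have hP_perfect : IsQPerfect P := by
    refine IsQPerfect.of_ker_of_surjective
      (π.subgroupComap_surjective_of_surjective K (QuotientGroup.mk'_surjective T)) ?_ hK
    rw [π.ker_subgroupComap, QuotientGroup.ker_mk']
    exact hT_perfect.of_mulEquiv (Subgroup.subgroupOfEquivOfLe hTP).symm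
  have hPT : P ≤ T := hT ▸ le_iSup₂ (f := fun H _ ↦ H) P hP_perfect
  rw [eq_bot_iff]
  calc K = P.map π :=
        (Subgroup.map_comap_eq_self_of_surjective (QuotientGroup.mk'_surjective T) K).symm
    _ ≤ T.map π := Subgroup.map_mono hPT
    _ = ⊥ := QuotientGroup.map_mk'_self T
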